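/- Assume 25 ≤ n ≤ 51. Then a_n > 0 and 49 a_n − 7 b_n + c_n < 0; consequently, there exists a unique real number τ < −7 such that a_n τ² + b_n τ + c_n = 0. -/
import Mathlib


/-- The coefficient `a_n`. -/
noncomputable def aCoef (n : ℕ) : ℝ :=
  2 * (((n : ℝ) - 12) / ((n : ℝ) + 6)) * (((n : ℝ) - 10) / ((n : ℝ) + 4)) * ((n : ℝ) - 8)

/-- The coefficient `b_n`. -/
noncomputable def bCoef (n : ℕ) : ℝ :=
  30 * (((n : ℝ) - 12) / ((n : ℝ) + 6)) * ((n : ℝ) - 10) - 8 * ((n : ℝ) - 12) + ((n : ℝ) + 8) / 2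

/-- The coefficient `c_n`. -/
noncomputable def cCoef (n : ℕ) : ℝ :=
  100 * (((n : ℝ) - 12) / ((n : ℝ) + 6)) * ((n : ℝ) + 8) - 50 * ((n : ℝ) + 12)
    + 3 * (((n : ℝ) + 8) / ((n : ℝ) - 14)) * (3 * (n : ℝ) + 52)
    - 7 * (((n : ℝ) + 8) / ((n : ℝ) - 14)) * (((n : ℝ) + 10) / ((n : ℝ) - 16)) *
        (((n : ℝ) + 24) / 10)
    + (((n : ℝ) + 8) / ((n : ℝ) - 14)) * (((n : ℝ) + 10) / ((n : ℝ) - 16)) *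
        (((n : ℝ) + 12) / ((n : ℝ) - 18)) * (((n : ℝ) + 32) / 50)

/-- A quadratic with positive leading coefficient that is negative at `-7`
has a unique root below `-7`. -/
lemma quad_unique_aux (a b c : ℝ) (ha : 0 < a) (h7 : 49 * a - 7 * b + c < 0) :
    ∃! τ : ℝ, τ < -7 ∧ a * τ ^ 2 + b * τ + c = 0 := by
  have hd : 0 < b ^ 2 - 4 * a * c := by
    nlinarith [sq_nonneg (b - 14 * a), mul_pos ha (show (0:ℝ) < 7 * b - 49 * a - c by linarith)]
  set s := Real.sqrt (b ^ 2 - 4 * a * c) with hs_def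
  have hs2 : s ^ 2 = b ^ 2 - 4 * a * c := Real.sq_sqrt hd.le
  have hs0 : 0 < s := Real.sqrt_pos.mpr hd
  set τ₀ : ℝ := (-b - s) / (2 * a) with ht0
  set τ₁ : ℝ := (-b + s) / (2 * a) with ht1
  have ha' : (2 * a) ≠ 0 := by positivity
  have key : ∀ τ : ℝ, a * τ ^ 2 + b * τ + c = a * (τ - τ₀) * (τ - τ₁) := by
    intro τ
    rw [ht0, ht1]
    field_simp
    nlinarith [hs2]
  have h7' := key (-7)
  have hlt01 : τ₀ < τ₁ := by
    rw [ht0, ht1]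
    exact (div_lt_div_iff_of_pos_right (by positivity)).mpr (by linarith)
  have hprod : a * (-7 - τ₀) * (-7 - τ₁) < 0 := by nlinarith [h7']
  have h0lt : τ₀ < -7 := by
    by_contra h
    push_neg at h
    nlinarith [mul_nonneg (mul_pos ha (show (0:ℝ) < τ₁ + 7 by linarith)).le
      (show (0:ℝ) ≤ τ₀ + 7 by linarith)]
  have h1gt : -7 < τ₁ := by
    by_contra h
    push_neg at h
    nlinarith [mul_nonneg (mul_pos ha (show (0:ℝ) < -7 - τ₀ by linarith)).le
      (show (0:ℝ) ≤ -7 - τ₁ by linarith)]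
  refine ⟨τ₀, ⟨h0lt, by rw [key]; ring⟩, ?_⟩
  rintro τ ⟨hτ, hroot⟩
  rw [key] at hroot
  rcases mul_eq_zero.mp hroot with h | h
  · rcases mul_eq_zero.mp h with h | h
    · exact absurd h ha.ne'
    · linarith [sub_eq_zero.mp h]
  · exfalso; have := sub_eq_zero.mp h; linarith

theorem stmt_18 (n : ℕ) (hn1 : 25 ≤ n) (hn2 : n ≤ 51) :
    0 < aCoef n ∧
    49 * aCoef n - 7 * bCoef n + cCoef n < 0 ∧
    ∃! τ : ℝ, τ < -7 ∧ aCoef n * τ ^ 2 + bCoef n * τ + cCoef n = 0 := by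
  have ha : 0 < aCoef n := by
    interval_cases n <;> norm_num [aCoef]
  have hf : 49 * aCoef n - 7 * bCoef n + cCoef n < 0 := by
    interval_cases n <;> norm_num [aCoef, bCoef, cCoef]
  exact ⟨ha, hf, quad_unique_aux _ _ _ ha hf⟩
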